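/- Let h : [0,1] × [0,1] → ℝ be a differentiable function such that |∂h/∂x| ≤ C₁ whenever h > K and |∂h/∂y| ≤ C₂ whenever h < -K, for some constants C₁, C₂, K > 0. Then h cannot take both values greater than K + C₁ + C₂ + 2K and values less than -(K + C₁ + C₂ + 2K). -/

import Mathlib

open Set in
/-- Barrier lemma: if `|f'| ≤ C` wherever `f ≥ M` and `f 0 > M + C`, then `f > M`
on all of `[0,1]`. -/
lemma flowbox_key_lemma (f f' : ℝ → ℝ) (C M : ℝ) (hC : 0 ≤ C)
    (hf : ∀ t ∈ Icc (0:ℝ) 1, HasDerivWithinAt f (f' t) (Icc 0 1) t)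
    (hbound : ∀ t ∈ Icc (0:ℝ) 1, M ≤ f t → |f' t| ≤ C)
    (h0 : M + C < f 0) : ∀ t ∈ Icc (0:ℝ) 1, M < f t := by
  by_contra hcon
  push_neg at hcon
  obtain ⟨t₁, ht₁, ht₁M⟩ := hcon
  have hcont : ContinuousOn f (Icc 0 1) := fun t ht => (hf t ht).continuousWithinAt
  have hTclosed : IsClosed (Icc (0:ℝ) 1 ∩ f ⁻¹' Iic M) :=
    hcont.preimage_isClosed_of_isClosed isClosed_Icc isClosed_Iic
  have hTcomp : IsCompact (Icc (0:ℝ) 1 ∩ f ⁻¹' Iic M) :=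
    isCompact_Icc.of_isClosed_subset hTclosed inter_subset_left
  obtain ⟨c, hcT, hcle⟩ := hTcomp.exists_isLeast ⟨t₁, ht₁, ht₁M⟩
  obtain ⟨⟨hc0, hc1⟩, hcM⟩ := hcT
  have sub : Icc (0:ℝ) c ⊆ Icc 0 1 := Icc_subset_Icc le_rfl hc1
  have hmvt := norm_image_sub_le_of_norm_deriv_le_segment'
    (f := f) (f' := f') (a := 0) (b := c) (C := C)
    (fun t ht => (hf t (sub ht)).mono sub)
    (fun t ht => by
      have htI : t ∈ Icc (0:ℝ) 1 := sub (Ico_subset_Icc_self ht)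
      have hnot : t ∉ (Icc (0:ℝ) 1 ∩ f ⁻¹' Iic M) := fun hmem => (hcle hmem).not_gt ht.2
      have hMt : M ≤ f t := by
        by_contra hle
        exact hnot ⟨htI, le_of_lt (lt_of_not_ge hle)⟩
      simpa using hbound t htI hMt)
    c ⟨hc0, le_rfl⟩
  rw [Real.norm_eq_abs] at hmvt
  have habs := abs_le.mp hmvt
  have hcM' : f c ≤ M := hcM
  nlinarith [habs.1, habs.2, hc1, hc0]

/-- Flowbox gradient bounds: a differentiable function on the unit square whose
`x`-derivative is bounded where `h > K` and whose `y`-derivative is bounded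
where `h < -K` cannot take both values above `K + C₁ + C₂ + 2K` and values
below `-(K + C₁ + C₂ + 2K)`. -/
theorem flowbox_function_bounded
    (h : ℝ × ℝ → ℝ) (C₁ C₂ K : ℝ)
    (hC₁ : 0 < C₁) (hC₂ : 0 < C₂) (hK : 0 < K)
    (hdiff : DifferentiableOn ℝ h (Set.Icc ((0:ℝ), (0:ℝ)) (1, 1)))
    (hdx : ∀ p ∈ Set.Icc ((0:ℝ), (0:ℝ)) ((1:ℝ), (1:ℝ)), K < h p →
      |fderivWithin ℝ h (Set.Icc ((0:ℝ), (0:ℝ)) (1, 1)) p (1, 0)| ≤ C₁)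
    (hdy : ∀ p ∈ Set.Icc ((0:ℝ), (0:ℝ)) ((1:ℝ), (1:ℝ)), h p < -K →
      |fderivWithin ℝ h (Set.Icc ((0:ℝ), (0:ℝ)) (1, 1)) p (0, 1)| ≤ C₂) :
    ¬ ((∃ p ∈ Set.Icc ((0:ℝ), (0:ℝ)) ((1:ℝ), (1:ℝ)), K + C₁ + C₂ + 2 * K < h p) ∧
       (∃ q ∈ Set.Icc ((0:ℝ), (0:ℝ)) ((1:ℝ), (1:ℝ)), h q < -(K + C₁ + C₂ + 2 * K))) := by
  rintro ⟨⟨p, hp, hpBig⟩, ⟨q, hq, hqBig⟩⟩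
  set S := Set.Icc ((0:ℝ), (0:ℝ)) ((1:ℝ), (1:ℝ)) with hSdef
  have hp' := hp
  have hq' := hq
  simp only [hSdef, Set.mem_Icc, Prod.le_def] at hp' hq'
  obtain ⟨⟨hp10, hp20⟩, hp11, hp21⟩ := hp'
  obtain ⟨⟨hq10, hq20⟩, hq11, hq21⟩ := hq'
  -- horizontal path from p to (q.1, p.2)
  set γ1 : ℝ → ℝ × ℝ := fun t => (p.1 + t * (q.1 - p.1), p.2) with hγ1def
  have maps1 : ∀ t ∈ Set.Icc (0:ℝ) 1, γ1 t ∈ S := by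
    intro t ht
    obtain ⟨ht0, ht1⟩ := ht
    simp only [hγ1def, hSdef, Set.mem_Icc, Prod.le_def]
    refine ⟨⟨?_, hp20⟩, ?_, hp21⟩
    · nlinarith [mul_nonneg (by linarith : (0:ℝ) ≤ 1 - t) hp10, mul_nonneg ht0 hq10]
    · nlinarith [mul_nonneg (by linarith : (0:ℝ) ≤ 1 - t) (by linarith : (0:ℝ) ≤ 1 - p.1),
        mul_nonneg ht0 (by linarith : (0:ℝ) ≤ 1 - q.1)]
  have hderiv1 : ∀ t ∈ Set.Icc (0:ℝ) 1,
      HasDerivWithinAt (fun t => h (γ1 t))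
        (fderivWithin ℝ h S (γ1 t) (q.1 - p.1, 0)) (Set.Icc 0 1) t := by
    intro t ht
    have h1 : HasDerivAt (fun t : ℝ => p.1 + t * (q.1 - p.1)) (q.1 - p.1) t := by
      simpa using ((hasDerivAt_id t).mul_const (q.1 - p.1)).const_add p.1
    have hγ : HasDerivAt γ1 (q.1 - p.1, 0) t := h1.prodMk (hasDerivAt_const t p.2)
    have hh := (hdiff (γ1 t) (maps1 t ht)).hasFDerivWithinAt
    exact hh.comp_hasDerivWithinAt t hγ.hasDerivWithinAt (fun s hs => maps1 s hs)
  have hbound1 : ∀ t ∈ Set.Icc (0:ℝ) 1, 2 * K + C₂ ≤ h (γ1 t) →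
      |fderivWithin ℝ h S (γ1 t) (q.1 - p.1, 0)| ≤ C₁ := by
    intro t ht hM
    have hK' : K < h (γ1 t) := by linarith
    have hb := hdx (γ1 t) (maps1 t ht) hK'
    have heq : ((q.1 - p.1, (0:ℝ)) : ℝ × ℝ) = (q.1 - p.1) • ((1:ℝ), (0:ℝ)) := by
      simp [Prod.smul_mk]
    rw [heq, map_smul, smul_eq_mul, abs_mul]
    have h1 : |q.1 - p.1| ≤ 1 := by
      rw [abs_le]; constructor <;> linarith
    calc |q.1 - p.1| * |fderivWithin ℝ h S (γ1 t) (1, 0)| ≤ 1 * C₁ :=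
          mul_le_mul h1 hb (abs_nonneg _) one_pos.le
      _ = C₁ := one_mul _
  have hstep1 : 2 * K + C₂ < h (q.1, p.2) := by
    have hkey := flowbox_key_lemma (fun t => h (γ1 t))
      (fun t => fderivWithin ℝ h S (γ1 t) (q.1 - p.1, 0))
      C₁ (2 * K + C₂) hC₁.le hderiv1 hbound1 (by
        have hγ0 : γ1 0 = p := by simp [hγ1def]
        show 2 * K + C₂ + C₁ < h (γ1 0)
        rw [hγ0]; linarith)
    have h1 : 2 * K + C₂ < h (γ1 1) := hkey 1 ⟨zero_le_one, le_rfl⟩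
    have hγ1 : γ1 1 = (q.1, p.2) := by
      simp only [hγ1def]
      exact Prod.ext (by ring) rfl
    rwa [hγ1] at h1
  -- vertical path from q to (q.1, p.2)
  set γ2 : ℝ → ℝ × ℝ := fun t => (q.1, q.2 + t * (p.2 - q.2)) with hγ2def
  have maps2 : ∀ t ∈ Set.Icc (0:ℝ) 1, γ2 t ∈ S := by
    intro t ht
    obtain ⟨ht0, ht1⟩ := ht
    simp only [hγ2def, hSdef, Set.mem_Icc, Prod.le_def]
    refine ⟨⟨hq10, ?_⟩, hq11, ?_⟩
    · nlinarith [mul_nonneg (by linarith : (0:ℝ) ≤ 1 - t) hq20, mul_nonneg ht0 hp20]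
    · nlinarith [mul_nonneg (by linarith : (0:ℝ) ≤ 1 - t) (by linarith : (0:ℝ) ≤ 1 - q.2),
        mul_nonneg ht0 (by linarith : (0:ℝ) ≤ 1 - p.2)]
  have hderiv2 : ∀ t ∈ Set.Icc (0:ℝ) 1,
      HasDerivWithinAt (fun t => -h (γ2 t))
        (-(fderivWithin ℝ h S (γ2 t) (0, p.2 - q.2))) (Set.Icc 0 1) t := by
    intro t ht
    have h1 : HasDerivAt (fun t : ℝ => q.2 + t * (p.2 - q.2)) (p.2 - q.2) t := by
      simpa using ((hasDerivAt_id t).mul_const (p.2 - q.2)).const_add q.2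
    have hγ : HasDerivAt γ2 (0, p.2 - q.2) t := (hasDerivAt_const t q.1).prodMk h1
    have hh := (hdiff (γ2 t) (maps2 t ht)).hasFDerivWithinAt
    exact (hh.comp_hasDerivWithinAt t hγ.hasDerivWithinAt (fun s hs => maps2 s hs)).neg
  have hbound2 : ∀ t ∈ Set.Icc (0:ℝ) 1, 2 * K + C₁ ≤ -h (γ2 t) →
      |-(fderivWithin ℝ h S (γ2 t) (0, p.2 - q.2))| ≤ C₂ := by
    intro t ht hM
    have hK' : h (γ2 t) < -K := by linarith
    have hb := hdy (γ2 t) (maps2 t ht) hK'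
    have heq : (((0:ℝ), p.2 - q.2) : ℝ × ℝ) = (p.2 - q.2) • ((0:ℝ), (1:ℝ)) := by
      simp [Prod.smul_mk]
    rw [abs_neg, heq, map_smul, smul_eq_mul, abs_mul]
    have h1 : |p.2 - q.2| ≤ 1 := by
      rw [abs_le]; constructor <;> linarith
    calc |p.2 - q.2| * |fderivWithin ℝ h S (γ2 t) (0, 1)| ≤ 1 * C₂ :=
          mul_le_mul h1 hb (abs_nonneg _) one_pos.le
      _ = C₂ := one_mul _
  have hstep2 : 2 * K + C₁ < -h (q.1, p.2) := by
    have hkey := flowbox_key_lemma (fun t => -h (γ2 t))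
      (fun t => -(fderivWithin ℝ h S (γ2 t) (0, p.2 - q.2)))
      C₂ (2 * K + C₁) hC₂.le hderiv2 hbound2 (by
        have hγ0 : γ2 0 = q := by simp [hγ2def]
        show 2 * K + C₁ + C₂ < -h (γ2 0)
        rw [hγ0]; linarith)
    have h1 : 2 * K + C₁ < -h (γ2 1) := hkey 1 ⟨zero_le_one, le_rfl⟩
    have hγ1 : γ2 1 = (q.1, p.2) := by
      simp only [hγ2def]
      exact Prod.ext rfl (by ring)
    rwa [hγ1] at h1
  linarith
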